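/- Let p be a prime, k a field of characteristic p, and n a natural number. Let ∂ be the unique k-linear derivation of R = k[x_1,…,x_n] with ∂(x_i) = x_i^2. Let a_1,…,a_n be integers with a_{i_0} ≡ 1 (mod p) for some index i_0, set f = ∑ a_i x_i, and let D : R → R be D(g) = ∂(g) + f·g. Then there exists a k-linear map σ : R → R with D∘σ − σ∘D = id_R. (Hence the twisted module R^f is null-homotopic as a p-complex, so its slash homology vanishes.) -/
import Mathlib


open MvPolynomial in
/-- for the derivation `∂` of `R = k[x_1,…,x_n]` with `∂(x_i) = x_i²` over a
field of characteristic `p`, and `f = ∑ a_i x_i` with integer coefficients one of which is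
congruent to `1` mod `p`, the twisted operator `D(g) = ∂(g) + f·g` admits a `k`-linear `σ`
with `D∘σ − σ∘D = id`. -/
theorem stmt_7 (p : ℕ) (hp : p.Prime) (k : Type*) [Field k] [CharP k p] (n : ℕ)
    (D : Derivation k (MvPolynomial (Fin n) k) (MvPolynomial (Fin n) k))
    (hD : ∀ i, D (MvPolynomial.X i) = MvPolynomial.X i ^ 2)
    (a : Fin n → ℤ) (i₀ : Fin n) (ha : a i₀ ≡ 1 [ZMOD (p : ℤ)]) :
    ∃ σ : Module.End k (MvPolynomial (Fin n) k),
      (D.toLinearMap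
          + LinearMap.mulLeft k (Finset.univ.sum fun i => a i • MvPolynomial.X i)) * σ
        - σ * (D.toLinearMap
          + LinearMap.mulLeft k (Finset.univ.sum fun i => a i • MvPolynomial.X i)) = 1 := by
  classical
  have hα : ((a i₀ : ℤ) : k) = 1 := by
    have hdvd : (p : ℤ) ∣ (1 - a i₀) := Int.ModEq.dvd ha
    have h0 : ((1 - a i₀ : ℤ) : k) = 0 := by
      rw [CharP.intCast_eq_zero_iff k p]
      exact_mod_cast hdvd
    push_cast at h0
    linear_combination -h0
  set c : ℕ → k := fun s => if p ∣ s then (0:k) else -1 with hc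
  set e : Fin n →₀ ℕ := Finsupp.single i₀ 1 with he
  set σ : Module.End k (MvPolynomial (Fin n) k) :=
    (MvPolynomial.basisMonomials (Fin n) k).constr k
      (fun m => c (m i₀) • (monomial (m - e) (1:k))) with hσ
  have hσm : ∀ (m : Fin n →₀ ℕ) (r : k), σ (monomial m r) = c (m i₀) • monomial (m - e) r := by
    intro m r
    have h1 : σ (monomial m 1) = c (m i₀) • monomial (m - e) 1 := by
      have := Module.Basis.constr_basis (MvPolynomial.basisMonomials (Fin n) k) k
        (fun m => c (m i₀) • (monomial (m - e) (1:k))) m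
      simpa [coe_basisMonomials] using this
    have : monomial m r = r • monomial m 1 := by simp [smul_monomial]
    rw [this, map_smul, h1, smul_comm]
    simp [smul_monomial]
  set T : Module.End k (MvPolynomial (Fin n) k) :=
    D.toLinearMap + LinearMap.mulLeft k (Finset.univ.sum fun i => a i • MvPolynomial.X i)
    with hT
  have hDm : ∀ (m : Fin n →₀ ℕ) (r : k),
      T (monomial m r)
        = ∑ i : Fin n, (((m i : k) + (a i : k)) • monomial (m + Finsupp.single i 1) r) := by
    intro m r
    have hDeq : D = mkDerivation k (fun i => X i ^ 2) := by
      apply derivation_ext; intro i; simp [hD]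
    have hder : D (monomial m r)
        = ∑ i : Fin n, ((m i : k) • monomial (m + Finsupp.single i 1) r) := by
      rw [hDeq, mkDerivation_monomial]
      rw [Finsupp.sum_fintype]
      · rw [Finset.smul_sum]
        refine Finset.sum_congr rfl fun i _ => ?_
        by_cases hmi : m i = 0
        · simp [hmi]
        · have hidx : m - Finsupp.single i 1 + Finsupp.single i 2 = m + Finsupp.single i 1 := by
            ext j
            simp only [Finsupp.add_apply, Finsupp.tsub_apply, Finsupp.single_apply]
            by_cases hj : i = j
            · subst hj; simp; omega
            · simp [hj]
          rw [smul_eq_mul, X_pow_eq_monomial, monomial_mul, hidx, mul_one,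
            smul_monomial, smul_monomial]
          simp [smul_eq_mul, mul_comm]
      · intro i; simp
    have hmul : (Finset.univ.sum fun i => a i • MvPolynomial.X i) * monomial m r
        = ∑ i : Fin n, ((a i : k) • monomial (m + Finsupp.single i 1) r) := by
      rw [Finset.sum_mul]
      refine Finset.sum_congr rfl fun i _ => ?_
      rw [smul_mul_assoc, X, monomial_mul, one_mul]
      rw [← Int.cast_smul_eq_zsmul k]
      rw [add_comm m]
    rw [hT]
    simp only [LinearMap.add_apply, LinearMap.mulLeft_apply, Derivation.coeFn_coe]
    rw [hder, hmul, ← Finset.sum_add_distrib]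
    exact Finset.sum_congr rfl fun i _ => (add_smul _ _ _).symm
  refine ⟨σ, ?_⟩
  apply MvPolynomial.linearMap_ext; intro m
  refine LinearMap.ext fun r => ?_
  simp only [LinearMap.coe_comp, Function.comp_apply, LinearMap.sub_apply, Module.End.mul_apply,
    Module.End.one_apply]
  rw [hσm, map_smul, hDm, hDm, map_sum]
  simp only [map_smul, hσm]
  rw [Finset.smul_sum, ← Finset.sum_sub_distrib]
  rw [Finset.sum_eq_single_of_mem i₀ (Finset.mem_univ _)]
  · -- main diagonal term
    have h1 : (m + Finsupp.single i₀ 1 : Fin n →₀ ℕ) i₀ = m i₀ + 1 := by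
      simp [Finsupp.single_apply]
    have h2 : m + Finsupp.single i₀ 1 - e = m := by
      ext j
      simp only [he, Finsupp.add_apply, Finsupp.tsub_apply, Finsupp.single_apply]
      omega
    rw [h1, h2, hα]
    rcases Nat.eq_zero_or_eq_succ_pred (m i₀) with h0 | h0
    · -- m i₀ = 0
      have hc0 : c (m i₀) = 0 := by rw [h0]; simp [hc]
      have hc1 : c (m i₀ + 1) = -1 := by
        rw [h0, hc]
        simp only [zero_add]
        rw [if_neg (by simpa using hp.one_lt.ne')]
      rw [hc0, hc1, h0]
      push_cast
      simp
    · -- m i₀ = s + 1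
      set s := (m i₀).pred with hs
      have hge : 1 ≤ m i₀ := by omega
      have h3 : (m - e) i₀ = s := by
        simp [he, Finsupp.single_apply]
        omega
      have h4 : m - e + Finsupp.single i₀ 1 = m := by
        ext j
        simp only [he, Finsupp.add_apply, Finsupp.tsub_apply, Finsupp.single_apply]
        by_cases hj : i₀ = j
        · subst hj; simp; omega
        · simp [hj]
      rw [h3, h4, h0]
      rw [smul_smul, smul_smul, ← sub_smul]
      have key : c (s + 1) * ((s : k) + 1) - (((s + 1 : ℕ) : k) + 1) * c (s + 1 + 1) = 1 := by
        by_cases h1' : p ∣ s + 1 <;> by_cases h2' : p ∣ s + 2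
        · exfalso
          have h1 : p ∣ 1 := by simpa using Nat.dvd_sub h2' h1'
          exact hp.one_lt.ne' (Nat.dvd_one.mp h1)
        · have hz : ((s + 1 : ℕ) : k) = 0 := (CharP.cast_eq_zero_iff k p _).2 h1'
          simp only [hc, if_pos h1', if_neg (by simpa [Nat.add_assoc] using h2')]
          rw [hz]
          ring
        · have hz : ((s + 2 : ℕ) : k) = 0 := (CharP.cast_eq_zero_iff k p _).2 h2'
          push_cast at hz
          simp only [hc, if_neg h1', if_pos (by simpa [Nat.add_assoc] using h2')]
          push_cast
          linear_combination -hz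
        · simp only [hc, if_neg h1', if_neg (by simpa [Nat.add_assoc] using h2')]
          push_cast
          ring
      push_cast at key ⊢
      rw [key, one_smul]
  · -- off-diagonal terms vanish
    intro i _ hi
    have h1 : (m + Finsupp.single i 1 : Fin n →₀ ℕ) i₀ = m i₀ := by
      simp [Finsupp.single_apply, hi]
    have h2 : (m - e) i = m i := by
      simp [he, Finsupp.single_apply, (Ne.symm hi : i₀ ≠ i)]
    rw [h1, h2]
    by_cases h0 : m i₀ = 0
    · have hc0 : c (m i₀) = 0 := by rw [h0]; simp [hc]
      rw [hc0]
      simp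
    · have hge : 1 ≤ m i₀ := Nat.one_le_iff_ne_zero.2 h0
      have hidx : m - e + Finsupp.single i 1 = m + Finsupp.single i 1 - e := by
        ext j
        simp only [he, Finsupp.add_apply, Finsupp.tsub_apply, Finsupp.single_apply]
        by_cases hj : i₀ = j
        · subst hj
          simp [hi]
        · simp [hj]
      rw [hidx, smul_comm]
      exact sub_self _
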